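/- arXiv:1212.1602 — 2 statements merged into one kernel-verified Lean document; each statement's English description precedes it below -/
import Mathlib

section
/- Let b>0 and u,v : [0,∞) → ℝ be in H^1 with u(0)=v(0)=0 and finite weighted norms. Then the sup over ξ ≥ 0 of (u(ξ)^2 + v(ξ)^2) e^{2bξ} is at most (2+2b) ‖(u,v)‖_{L^2_b} ‖(u,v)‖_{H^1_b}, where ‖(u,v)‖_{L^2_b}^2 = ∫_0^∞ (u^2+v^2) e^{2bx} dx and ‖(u,v)‖_{H^1_b}^2 = ∫_0^∞ (u^2+v^2+u_x^2+v_x^2) e^{2bx} dx. In particular ‖(u,v) e^{bx}‖_{L^∞} ≤ √(2+2b) ‖(u,v)‖_{L^2_b}^{1/2} ‖(u,v)‖_{H^1_b}^{1/2}. -/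
open MeasureTheory Real Set Filter Topology

/-! With `F x = (u x ^ 2 + v x ^ 2) * exp (2 * b * x)` and `F 0 = 0`, the fundamental theorem of
calculus gives `F ξ ≤ ∫₀^∞ |F'|`, where `F' = (2 (u u' + v v') + 2 b (u² + v²)) e^{2bx}`.
Cauchy–Schwarz, first pointwise in `ℝ²` and then in `L²(0, ∞)`, bounds this by
`2 ‖(u, v)‖_{L²_b} ‖(u', v')‖_{L²_b} + 2 b ‖(u, v)‖²_{L²_b}`, and both weighted `L²` norms are at
most the `H¹_b` norm. -/

theorem abs_mul_add_mul_le_sqrt_mul_sqrt (a b c d : ℝ) :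
    |a * c + b * d| ≤ √(a ^ 2 + b ^ 2) * √(c ^ 2 + d ^ 2) := by
  rw [← sqrt_mul (by positivity)]
  exact abs_le_sqrt (by nlinarith [sq_nonneg (a * d - b * c)])

theorem integral_mul_le_sqrt_mul_sqrt {α : Type*} [MeasurableSpace α] {μ : Measure α}
    {f g : α → ℝ} (hf0 : 0 ≤ᵐ[μ] f) (hg0 : 0 ≤ᵐ[μ] g) (hf : MemLp f 2 μ) (hg : MemLp g 2 μ) :
    ∫ x, f x * g x ∂μ ≤ √(∫ x, f x ^ 2 ∂μ) * √(∫ x, g x ^ 2 ∂μ) := by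
  have := integral_mul_le_Lp_mul_Lq_of_nonneg HolderConjugate.two_two hf0 hg0
    (by simpa using hf) (by simpa using hg)
  simpa only [rpow_two, ← sqrt_eq_rpow] using this

theorem le_integral_Ioi_abs_of_hasDerivAt {F F' : ℝ → ℝ}
    (hF : ∀ x ∈ Ici (0 : ℝ), HasDerivAt F (F' x) x) (hF0 : F 0 = 0)
    (hF' : IntegrableOn F' (Ioi 0)) {ξ : ℝ} (hξ : 0 ≤ ξ) :
    F ξ ≤ ∫ x in Ioi 0, |F' x| := by
  have hint : IntervalIntegrable F' volume 0 ξ :=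
    (intervalIntegrable_iff_integrableOn_Ioc_of_le hξ).2 (hF'.mono_set Ioc_subset_Ioi_self)
  calc F ξ = ∫ x in (0)..ξ, F' x := by
        rw [intervalIntegral.integral_eq_sub_of_hasDerivAt
          (fun x hx => hF x (by rw [uIcc_of_le hξ] at hx; exact hx.1)) hint, hF0, sub_zero]
    _ ≤ ∫ x in Ioc 0 ξ, |F' x| := by
        rw [intervalIntegral.integral_of_le hξ]
        exact integral_mono hint.1 hint.1.abs fun x => le_abs_self _
    _ ≤ ∫ x in Ioi 0, |F' x| :=
        setIntegral_mono_set hF'.abs (ae_of_all _ fun x => abs_nonneg _)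
          Ioc_subset_Ioi_self.eventuallyLE

theorem sqrt_mul_exp_sq {s : ℝ} (hs : 0 ≤ s) (b x : ℝ) :
    (√s * exp (b * x)) ^ 2 = s * exp (2 * b * x) := by
  rw [mul_pow, sq_sqrt hs, sq, ← exp_add]
  ring_nf

theorem memLp_two_sqrt_mul_exp {μ : Measure ℝ} {b : ℝ} {s : ℝ → ℝ} (hs : Measurable s)
    (hs0 : ∀ x, 0 ≤ s x) (h : Integrable (fun x => s x * exp (2 * b * x)) μ) :
    MemLp (fun x => √(s x) * exp (b * x)) 2 μ := by
  refine (memLp_two_iff_integrable_sq (by fun_prop)).2 ?_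
  simpa only [sqrt_mul_exp_sq (hs0 _)] using h

theorem hasDerivAt_sq_add_sq_mul_exp {u v : ℝ → ℝ} {u' v' : ℝ} (b x : ℝ)
    (hu : HasDerivAt u u' x) (hv : HasDerivAt v v' x) :
    HasDerivAt (fun y => (u y ^ 2 + v y ^ 2) * exp (2 * b * y))
      ((2 * (u x * u' + v x * v') + 2 * b * (u x ^ 2 + v x ^ 2)) * exp (2 * b * x)) x := by
  have he : HasDerivAt (fun y => exp (2 * b * y)) (exp (2 * b * x) * (2 * b)) x := by
    simpa using ((hasDerivAt_id x).const_mul (2 * b)).exp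
  refine (((hu.fun_pow 2).fun_add (hv.fun_pow 2)).fun_mul he).congr_deriv ?_
  push_cast
  ring

theorem abs_deriv_sq_add_sq_mul_exp_le {b : ℝ} (hb : 0 ≤ b) (a c p q x : ℝ) :
    |(2 * (a * p + c * q) + 2 * b * (a ^ 2 + c ^ 2)) * exp (2 * b * x)| ≤
      2 * ((√(a ^ 2 + c ^ 2) * exp (b * x)) * (√(p ^ 2 + q ^ 2) * exp (b * x))) +
        2 * b * ((a ^ 2 + c ^ 2) * exp (2 * b * x)) := by
  have hcs := abs_mul_add_mul_le_sqrt_mul_sqrt a c p q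
  have hexp : exp (2 * b * x) = exp (b * x) * exp (b * x) := by
    rw [← exp_add]; ring_nf
  rw [abs_mul, abs_of_pos (exp_pos _)]
  calc |2 * (a * p + c * q) + 2 * b * (a ^ 2 + c ^ 2)| * exp (2 * b * x)
      ≤ (2 * (√(a ^ 2 + c ^ 2) * √(p ^ 2 + q ^ 2)) + 2 * b * (a ^ 2 + c ^ 2)) *
          exp (2 * b * x) := by
        refine mul_le_mul_of_nonneg_right ((abs_add_le _ _).trans ?_) (exp_pos _).le
        have hterm : 0 ≤ 2 * b * (a ^ 2 + c ^ 2) := by positivity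
        rw [abs_mul, abs_of_pos two_pos, abs_of_nonneg hterm]
        gcongr
    _ = _ := by rw [hexp]; ring

theorem measurable_of_hasDerivAt {u u' : ℝ → ℝ} (hu : ∀ x, HasDerivAt u (u' x) x) :
    Measurable u' := by
  rw [show u' = deriv u from funext fun x => (hu x).deriv.symm]
  exact measurable_deriv u

theorem sq_add_sq_mul_exp_le {b : ℝ} {u v u' v' : ℝ → ℝ} (hb : 0 ≤ b)
    (hu : ∀ x, HasDerivAt u (u' x) x) (hv : ∀ x, HasDerivAt v (v' x) x)
    (hu0 : u 0 = 0) (hv0 : v 0 = 0)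
    (h1 : IntegrableOn (fun x => (u x ^ 2 + v x ^ 2) * exp (2 * b * x)) (Ioi 0))
    (h2 : IntegrableOn (fun x => (u' x ^ 2 + v' x ^ 2) * exp (2 * b * x)) (Ioi 0))
    {ξ : ℝ} (hξ : 0 ≤ ξ) :
    (u ξ ^ 2 + v ξ ^ 2) * exp (2 * b * ξ) ≤
      2 * √(∫ x in Ioi 0, (u x ^ 2 + v x ^ 2) * exp (2 * b * x)) *
          √(∫ x in Ioi 0, (u' x ^ 2 + v' x ^ 2) * exp (2 * b * x)) +
        2 * b * ∫ x in Ioi 0, (u x ^ 2 + v x ^ 2) * exp (2 * b * x) := by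
  have hcu : Continuous u := continuous_iff_continuousAt.2 fun x => (hu x).continuousAt
  have hcv : Continuous v := continuous_iff_continuousAt.2 fun x => (hv x).continuousAt
  have hmu' := measurable_of_hasDerivAt hu
  have hmv' := measurable_of_hasDerivAt hv
  set f := fun x => √(u x ^ 2 + v x ^ 2) * exp (b * x)
  set g := fun x => √(u' x ^ 2 + v' x ^ 2) * exp (b * x)
  have hf : MemLp f 2 (volume.restrict (Ioi 0)) :=
    memLp_two_sqrt_mul_exp (by fun_prop) (fun _ => by positivity) h1
  have hg : MemLp g 2 (volume.restrict (Ioi 0)) :=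
    memLp_two_sqrt_mul_exp (by fun_prop) (fun _ => by positivity) h2
  have hfg : IntegrableOn (fun x => f x * g x) (Ioi 0) := hf.integrable_mul hg
  have hbound := fun x => abs_deriv_sq_add_sq_mul_exp_le hb (u x) (v x) (u' x) (v' x) x
  have hF' : IntegrableOn (fun x => (2 * (u x * u' x + v x * v' x) +
      2 * b * (u x ^ 2 + v x ^ 2)) * exp (2 * b * x)) (Ioi 0) :=
    ((hfg.const_mul 2).add (h1.const_mul (2 * b))).mono' (by fun_prop) (ae_of_all _ hbound)
  have hCS : ∫ x in Ioi 0, f x * g x ≤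
      √(∫ x in Ioi 0, (u x ^ 2 + v x ^ 2) * exp (2 * b * x)) *
        √(∫ x in Ioi 0, (u' x ^ 2 + v' x ^ 2) * exp (2 * b * x)) := by
    simpa (disch := positivity) only [f, g, sqrt_mul_exp_sq] using
      integral_mul_le_sqrt_mul_sqrt (ae_of_all _ fun x => by positivity)
        (ae_of_all _ fun x => by positivity) hf hg
  calc (u ξ ^ 2 + v ξ ^ 2) * exp (2 * b * ξ)
      ≤ ∫ x in Ioi 0, |(2 * (u x * u' x + v x * v' x) +
          2 * b * (u x ^ 2 + v x ^ 2)) * exp (2 * b * x)| :=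
        le_integral_Ioi_abs_of_hasDerivAt
          (fun x _ => hasDerivAt_sq_add_sq_mul_exp b x (hu x) (hv x)) (by simp [hu0, hv0])
          hF' hξ
    _ ≤ ∫ x in Ioi 0, (2 * (f x * g x) + 2 * b * ((u x ^ 2 + v x ^ 2) * exp (2 * b * x))) :=
        integral_mono hF'.abs ((hfg.const_mul 2).add (h1.const_mul _)) hbound
    _ = 2 * (∫ x in Ioi 0, f x * g x) +
          2 * b * ∫ x in Ioi 0, (u x ^ 2 + v x ^ 2) * exp (2 * b * x) := by
        rw [integral_add (hfg.const_mul 2) (h1.const_mul _),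
          integral_const_mul, integral_const_mul]
    _ ≤ _ := by linarith [hCS]

theorem stmt_2 (b : ℝ) (hb : 0 < b) (u v u' v' : ℝ → ℝ)
    (hu : ∀ x, HasDerivAt u (u' x) x) (hv : ∀ x, HasDerivAt v (v' x) x)
    (hu0 : u 0 = 0) (hv0 : v 0 = 0)
    (h1 : IntegrableOn (fun x => ((u x)^2 + (v x)^2) * Real.exp (2*b*x)) (Set.Ioi 0))
    (h2 : IntegrableOn (fun x => ((u' x)^2 + (v' x)^2) * Real.exp (2*b*x)) (Set.Ioi 0)) :
    ∀ ξ ≥ (0:ℝ),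
      ((u ξ)^2 + (v ξ)^2) * Real.exp (2*b*ξ) ≤
        (2 + 2*b) *
          Real.sqrt (∫ x in Set.Ioi (0:ℝ), ((u x)^2 + (v x)^2) * Real.exp (2*b*x)) *
          Real.sqrt
            (∫ x in Set.Ioi (0:ℝ),
              ((u x)^2 + (v x)^2 + (u' x)^2 + (v' x)^2) * Real.exp (2*b*x))
      ∧
      Real.sqrt ((u ξ)^2 + (v ξ)^2) * Real.exp (b*ξ) ≤
        Real.sqrt (2 + 2*b) *
          Real.sqrt
            (Real.sqrt (∫ x in Set.Ioi (0:ℝ), ((u x)^2 + (v x)^2) * Real.exp (2*b*x))) *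
          Real.sqrt
            (Real.sqrt
              (∫ x in Set.Ioi (0:ℝ),
                ((u x)^2 + (v x)^2 + (u' x)^2 + (v' x)^2) * Real.exp (2*b*x))) := by
  intro ξ hξ
  set A := ∫ x in Ioi (0:ℝ), (u x ^ 2 + v x ^ 2) * exp (2 * b * x)
  set C := ∫ x in Ioi (0:ℝ), (u' x ^ 2 + v' x ^ 2) * exp (2 * b * x)
  set T := ∫ x in Ioi (0:ℝ), (u x ^ 2 + v x ^ 2 + u' x ^ 2 + v' x ^ 2) * exp (2 * b * x)
  have hT : T = A + C := by
    rw [← integral_add h1 h2]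
    exact integral_congr_ae (ae_of_all _ fun x => by ring)
  have hA : 0 ≤ A := setIntegral_nonneg measurableSet_Ioi fun x _ => by positivity
  have hC : 0 ≤ C := setIntegral_nonneg measurableSet_Ioi fun x _ => by positivity
  have hAT : √A ≤ √T := sqrt_le_sqrt (by linarith)
  have hCT : √C ≤ √T := sqrt_le_sqrt (by linarith)
  have hsq : (u ξ ^ 2 + v ξ ^ 2) * exp (2 * b * ξ) ≤ (2 + 2 * b) * √A * √T :=
    calc (u ξ ^ 2 + v ξ ^ 2) * exp (2 * b * ξ) ≤ 2 * √A * √C + 2 * b * (√A * √A) := by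
          rw [mul_self_sqrt hA]; exact sq_add_sq_mul_exp_le hb.le hu hv hu0 hv0 h1 h2 hξ
      _ ≤ 2 * √A * √T + 2 * b * (√A * √T) := by gcongr
      _ = (2 + 2 * b) * √A * √T := by ring
  refine ⟨hsq, ?_⟩
  calc √(u ξ ^ 2 + v ξ ^ 2) * exp (b * ξ) = √((u ξ ^ 2 + v ξ ^ 2) * exp (2 * b * ξ)) := by
        rw [← sqrt_mul_exp_sq (by positivity), sqrt_sq (by positivity)]
    _ ≤ √((2 + 2 * b) * √A * √T) := sqrt_le_sqrt hsq
    _ = √(2 + 2 * b) * √√A * √√T := by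
        rw [sqrt_mul (by positivity), sqrt_mul (by positivity)]
end

section
/- Let b > 0 and let u : [0,∞) → ℝ be smooth with u(0)=0 and all terms decaying at infinity (u, u_x, u_xx → 0 with the weight e^{2bx}). Then ∫_0^∞ (e^{2bx} − 1) u_{xxx} u dx = 3b ∫_0^∞ u_x^2 e^{2bx} dx − 4b^3 ∫_0^∞ u^2 e^{2bx} dx. -/
/-!
Three integrations by parts move all derivatives of `∫ w u''' u` onto the weight:
`∫ w u''' u = (3/2) ∫ w' u'² - (1/2) ∫ w''' u² + [w u u'' - w u'²/2 - w' u u' + w'' u²/2]`.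
For `w = e^{2bx} - 1` one has `w' = 2b e^{2bx}` and `w''' = 8b³ e^{2bx}`, which gives the two
integrals of the statement. The boundary term vanishes at `0` because `w 0 = 0 = u 0`, and at
infinity because of the assumed weighted decay (for the unweighted parts `u u''` and `u'²`,
since `e^{2bx} ≥ 1`).
-/

open MeasureTheory Real Set Filter Topology

noncomputable def weightedIBPBoundary (w w' w'' u u' u'' : ℝ → ℝ) (x : ℝ) : ℝ :=
  w x * u x * u'' x - w x * u' x ^ 2 / 2 - w' x * u x * u' x + w'' x * u x ^ 2 / 2

theorem hasDerivAt_weightedIBPBoundary {w w' w'' w''' u u' u'' u''' : ℝ → ℝ} {x : ℝ}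
    (hw : HasDerivAt w (w' x) x) (hw' : HasDerivAt w' (w'' x) x)
    (hw'' : HasDerivAt w'' (w''' x) x) (hu : HasDerivAt u (u' x) x)
    (hu' : HasDerivAt u' (u'' x) x) (hu'' : HasDerivAt u'' (u''' x) x) :
    HasDerivAt (weightedIBPBoundary w w' w'' u u' u'')
      (w x * u''' x * u x - 3 / 2 * (w' x * u' x ^ 2) + 1 / 2 * (w''' x * u x ^ 2)) x := by
  have h := ((((hw.mul hu).mul hu'').sub ((hw.mul (hu'.pow 2)).div_const 2)).sub
    ((hw'.mul hu).mul hu')).add ((hw''.mul (hu.pow 2)).div_const 2)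
  refine h.congr_deriv ?_
  simp only [Pi.mul_apply, Pi.pow_apply]
  ring

theorem integral_Ioi_weight_mul_third_deriv_mul {w w' w'' w''' u u' u'' u''' : ℝ → ℝ} {a : ℝ}
    (hw : ∀ x, HasDerivAt w (w' x) x) (hw' : ∀ x, HasDerivAt w' (w'' x) x)
    (hw'' : ∀ x, HasDerivAt w'' (w''' x) x) (hu : ∀ x, HasDerivAt u (u' x) x)
    (hu' : ∀ x, HasDerivAt u' (u'' x) x) (hu'' : ∀ x, HasDerivAt u'' (u''' x) x)
    (hint : IntegrableOn (fun x => w x * u''' x * u x) (Ioi a))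
    (hint' : IntegrableOn (fun x => w' x * u' x ^ 2) (Ioi a))
    (hint''' : IntegrableOn (fun x => w''' x * u x ^ 2) (Ioi a))
    (hlim : Tendsto (weightedIBPBoundary w w' w'' u u' u'') atTop (𝓝 0)) :
    ∫ x in Ioi a, w x * u''' x * u x
      = 3 / 2 * (∫ x in Ioi a, w' x * u' x ^ 2)
        - 1 / 2 * (∫ x in Ioi a, w''' x * u x ^ 2)
        - weightedIBPBoundary w w' w'' u u' u'' a := by
  have hderiv x := hasDerivAt_weightedIBPBoundary (hw x) (hw' x) (hw'' x) (hu x) (hu' x) (hu'' x)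
  have hint_sub : IntegrableOn (fun x => w x * u''' x * u x - 3 / 2 * (w' x * u' x ^ 2)) (Ioi a) :=
    hint.sub (hint'.const_mul _)
  have hftc := integral_Ioi_of_hasDerivAt_of_tendsto (hderiv a).continuousAt.continuousWithinAt
    (fun x _ => hderiv x) (hint_sub.add (hint'''.const_mul (1 / 2))) hlim
  rw [integral_add hint_sub (hint'''.const_mul _), integral_sub hint (hint'.const_mul _),
    integral_const_mul, integral_const_mul] at hftc
  linarith

theorem tendsto_zero_of_tendsto_mul_exp {g : ℝ → ℝ} {c : ℝ} (hc : 0 ≤ c)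
    (hg : Tendsto (fun x => g x * exp (c * x)) atTop (𝓝 0)) : Tendsto g atTop (𝓝 0) := by
  have hbdd : IsBoundedUnder (· ≤ ·) atTop fun x => ‖exp (-(c * x))‖ := by
    refine isBoundedUnder_of_eventually_le (a := 1) ?_
    filter_upwards [eventually_ge_atTop 0] with x hx
    rw [norm_of_nonneg (exp_pos _).le, exp_le_one_iff, neg_nonpos]
    positivity
  refine (hg.zero_mul_isBoundedUnder_le hbdd).congr fun x => ?_
  rw [mul_assoc, ← exp_add, add_neg_cancel, exp_zero, mul_one]

theorem hasDerivAt_exp_const_mul (c x : ℝ) :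
    HasDerivAt (fun x => exp (c * x)) (c * exp (c * x)) x := by
  simpa [mul_comm] using ((hasDerivAt_id x).const_mul c).exp

theorem stmt_8 (b : ℝ) (hb : 0 < b) (u u' u'' u''' : ℝ → ℝ)
    (h1 : ∀ x, HasDerivAt u (u' x) x)
    (h2 : ∀ x, HasDerivAt u' (u'' x) x)
    (h3 : ∀ x, HasDerivAt u'' (u''' x) x)
    (hu0 : u 0 = 0)
    (d1 : Tendsto (fun x => u x * u'' x * Real.exp (2*b*x)) atTop (𝓝 0))
    (d2 : Tendsto (fun x => (u' x)^2 * Real.exp (2*b*x)) atTop (𝓝 0))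
    (d3 : Tendsto (fun x => u x * u' x * Real.exp (2*b*x)) atTop (𝓝 0))
    (d4 : Tendsto (fun x => (u x)^2 * Real.exp (2*b*x)) atTop (𝓝 0))
    (i1 : IntegrableOn (fun x => (Real.exp (2*b*x) - 1) * u''' x * u x) (Set.Ioi 0))
    (i2 : IntegrableOn (fun x => (u' x)^2 * Real.exp (2*b*x)) (Set.Ioi 0))
    (i3 : IntegrableOn (fun x => (u x)^2 * Real.exp (2*b*x)) (Set.Ioi 0)) :
    (∫ x in Set.Ioi (0:ℝ), (Real.exp (2*b*x) - 1) * u''' x * u x)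
      = 3 * b * (∫ x in Set.Ioi (0:ℝ), (u' x)^2 * Real.exp (2*b*x))
        - 4 * b^3 * (∫ x in Set.Ioi (0:ℝ), (u x)^2 * Real.exp (2*b*x)) := by
  have he x := hasDerivAt_exp_const_mul (2 * b) x
  have hw x : HasDerivAt (fun x => exp (2 * b * x) - 1) (2 * b * exp (2 * b * x)) x :=
    (he x).sub_const 1
  have hw' x : HasDerivAt (fun x => 2 * b * exp (2 * b * x)) (4 * b ^ 2 * exp (2 * b * x)) x :=
    ((he x).const_mul (2 * b)).congr_deriv (by ring)
  have hw'' x : HasDerivAt (fun x => 4 * b ^ 2 * exp (2 * b * x)) (8 * b ^ 3 * exp (2 * b * x)) x :=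
    ((he x).const_mul (4 * b ^ 2)).congr_deriv (by ring)
  have hweight (c y x : ℝ) : c * exp (2 * b * x) * y = c * (y * exp (2 * b * x)) := by ring
  rw [integral_Ioi_weight_mul_third_deriv_mul hw hw' hw'' h1 h2 h3 i1
    (IntegrableOn.congr_fun (i2.const_mul _) (fun x _ => (hweight _ _ x).symm) measurableSet_Ioi)
    (IntegrableOn.congr_fun (i3.const_mul _) (fun x _ => (hweight _ _ x).symm) measurableSet_Ioi)
    ?_]
  · simp only [hweight, integral_const_mul, weightedIBPBoundary, hu0, mul_zero, exp_zero]
    ring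
  · have huu'' := tendsto_zero_of_tendsto_mul_exp (by positivity) d1
    have hu'sq := tendsto_zero_of_tendsto_mul_exp (by positivity) d2
    have h := (((d1.sub (d2.div_const 2)).sub (d3.const_mul (2 * b))).add
      (d4.const_mul (2 * b ^ 2))).sub (huu''.sub (hu'sq.div_const 2))
    simp only [zero_div, sub_zero, mul_zero, add_zero] at h
    refine h.congr fun x => ?_
    simp only [weightedIBPBoundary]
    ring
end
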